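/- Failure of the translation for implication formulas: Let k ≥ 3, let L be the linear order {0, 1, …, 2k−1} (a finite distributive lattice with ⊥ = 0 and ⊤ = 2k−1), let L_f be the sublattice {0, 2k−1}, and let f : L → L_f be given by f(x) = 2k−1 if x ≥ k and f(x) = 0 otherwise. Then f preserves arbitrary bounds, yet there exist an mv-CGS M over L, a state q of M, and an implication formula φ = p2 → p1 of mv-ATL*→ (with p1, p2 ∈ AP) such that [[φ]]_{M,q} = 0 while [[φ]]_{f(M),q} = 2k−1; in particular f([[φ]]_{M,q}) ≠ [[φ]]_{f(M),q}, so the translation condition fails. (Such M can be obtained by taking any CGS and setting V(p1,q) = k1 and V(p2,q) = k2 for any 0 < k1 < k2 < k.) -/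

import Mathlib

open Classical

/-- A concurrent game structure (CGS): availability function `d` (with every
`d a q` nonempty) and a deterministic transition function `t`. -/
structure CGS (Agt St Act : Type*) where
  d : Agt → St → Set Act
  d_nonempty : ∀ a q, (d a q).Nonempty
  t : St → (Agt → Act) → St

namespace CGS

variable {Agt St Act : Type*}

/-- An action profile `α` is available at state `q`. -/
def Avail (G : CGS Agt St Act) (q : St) (α : Agt → Act) : Prop :=
  ∀ a, α a ∈ G.d a q

/-- `lam` is a path of `G`: each step is realized by some available profile. -/
def IsPath (G : CGS Agt St Act) (lam : ℕ → St) : Prop :=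
  ∀ i, ∃ α, G.Avail (lam i) α ∧ G.t (lam i) α = lam (i + 1)

/-- A perfect-recall strategy for agent `a`: a choice of an available action
for every nonempty finite history, represented as (proper prefix, last state). -/
structure PRStrategy (G : CGS Agt St Act) (a : Agt) where
  act : List St → St → Act
  avail : ∀ h q, act h q ∈ G.d a q

/-- A collective perfect-recall strategy for the coalition `A`. -/
def PRColl (G : CGS Agt St Act) (A : Set Agt) := (a : A) → PRStrategy G (a : Agt)

/-- The outcome set of a collective perfect-recall strategy `s` from state `q`. -/
def prOut (G : CGS Agt St Act) {A : Set Agt} (q : St) (s : PRColl G A) : Set (ℕ → St) :=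
  { lam | lam 0 = q ∧ ∀ i, ∃ α, G.Avail (lam i) α ∧ G.t (lam i) α = lam (i + 1) ∧
      ∀ a : A, α (a : Agt) = (s a).act (List.ofFn fun j : Fin i => lam j) (lam i) }

end CGS

mutual
/-- State formulas of mv-ATL*→ (mv-ATL* extended with the two-valued
implication operator `→`). -/
inductive SFormI (AP C Agt : Type) : Type
  | const : C → SFormI AP C Agt
  | atom  : AP → SFormI AP C Agt
  | and   : SFormI AP C Agt → SFormI AP C Agt → SFormI AP C Agt
  | or    : SFormI AP C Agt → SFormI AP C Agt → SFormI AP C Agt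
  | imp   : SFormI AP C Agt → SFormI AP C Agt → SFormI AP C Agt
  | coop  : Set Agt → PFormI AP C Agt → SFormI AP C Agt
  | nec   : Set Agt → PFormI AP C Agt → SFormI AP C Agt
/-- Path formulas of mv-ATL*→. -/
inductive PFormI (AP C Agt : Type) : Type
  | state : SFormI AP C Agt → PFormI AP C Agt
  | and   : PFormI AP C Agt → PFormI AP C Agt → PFormI AP C Agt
  | or    : PFormI AP C Agt → PFormI AP C Agt → PFormI AP C Agt
  | next  : PFormI AP C Agt → PFormI AP C Agt
  | untl  : PFormI AP C Agt → PFormI AP C Agt → PFormI AP C Agt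
  | wuntl : PFormI AP C Agt → PFormI AP C Agt → PFormI AP C Agt
end

variable {Agt St Act AP C : Type} {L : Type*} [CompleteLattice L]

mutual
/-- Multi-valued truth value of a state formula of mv-ATL*→ at a state;
`[[φ1 → φ2]] = ⊤` if `[[φ1]] ≤ [[φ2]]` and `⊥` otherwise. -/
noncomputable def svalI (G : CGS Agt St Act) (σ : C → L) (V : AP → St → L) :
    SFormI AP C Agt → St → L
  | .const c, _ => σ c
  | .atom p, q => V p q
  | .and φ ψ, q => svalI G σ V φ q ⊓ svalI G σ V ψ q
  | .or φ ψ, q => svalI G σ V φ q ⊔ svalI G σ V ψ q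
  | .imp φ ψ, q => if svalI G σ V φ q ≤ svalI G σ V ψ q then ⊤ else ⊥
  | .coop A γ, q => ⨆ s : CGS.PRColl G A, ⨅ lam ∈ CGS.prOut G q s, pvalI G σ V γ lam
  | .nec A γ, q => ⨅ s : CGS.PRColl G A, ⨆ lam ∈ CGS.prOut G q s, pvalI G σ V γ lam

/-- Multi-valued truth value of a path formula of mv-ATL*→ on a path. -/
noncomputable def pvalI (G : CGS Agt St Act) (σ : C → L) (V : AP → St → L) :
    PFormI AP C Agt → (ℕ → St) → L
  | .state φ, lam => svalI G σ V φ (lam 0)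
  | .and γ δ, lam => pvalI G σ V γ lam ⊓ pvalI G σ V δ lam
  | .or γ δ, lam => pvalI G σ V γ lam ⊔ pvalI G σ V δ lam
  | .next γ, lam => pvalI G σ V γ (fun k => lam (k + 1))
  | .untl γ δ, lam =>
      ⨆ i : ℕ, (pvalI G σ V δ (fun k => lam (k + i)) ⊓
        ⨅ j : Fin i, pvalI G σ V γ (fun k => lam (k + (j : ℕ))))
  | .wuntl γ δ, lam =>
      (⨅ i : ℕ, pvalI G σ V γ (fun k => lam (k + i))) ⊔
      ⨆ i : ℕ, (pvalI G σ V δ (fun k => lam (k + i)) ⊓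
        ⨅ j : Fin i, pvalI G σ V γ (fun k => lam (k + (j : ℕ))))
end

/-- A function between complete lattices preserves arbitrary bounds if it
commutes with arbitrary suprema and infima. -/
def PreservesBounds {L L' : Type*} [CompleteLattice L] [CompleteLattice L'] (f : L → L') : Prop :=
  (∀ S : Set L, f (sSup S) = sSup (f '' S)) ∧ (∀ S : Set L, f (sInf S) = sInf (f '' S))

theorem preservesBounds_le_of_finite {Λ : Type*} [CompleteLinearOrder Λ] [Finite Λ] {a : Λ}
    (ha : a ≠ ⊥) : PreservesBounds (fun x : Λ => a ≤ x) := by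
  refine ⟨fun S => ?_, fun S => ?_⟩
  · rw [sSup_Prop_eq, Set.exists_mem_image]
    rcases S.eq_empty_or_nonempty with rfl | hS
    · simpa using ha
    · exact propext ⟨fun h => ⟨sSup S, hS.csSup_mem S.toFinite, h⟩,
        fun ⟨x, hx, hax⟩ => hax.trans (le_sSup hx)⟩
  · rw [sInf_Prop_eq, Set.forall_mem_image]
    exact propext le_sInf_iff

section Implication

variable {G : CGS Agt St Act} {σ : C → L} {V : AP → St → L} {φ ψ : SFormI AP C Agt} {q : St}

theorem svalI_imp_of_le (h : svalI G σ V φ q ≤ svalI G σ V ψ q) :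
    svalI G σ V (.imp φ ψ) q = ⊤ := by
  rw [svalI, if_pos h]

theorem svalI_imp_of_not_le (h : ¬ svalI G σ V φ q ≤ svalI G σ V ψ q) :
    svalI G σ V (.imp φ ψ) q = ⊥ := by
  rw [svalI, if_neg h]

end Implication

/-- Failure of the translation for implication formulas: for `k ≥ 3`, on the
`2k`-element chain `L = Fin (2k)` (written `Fin (2*k-1+1)`), the reduction
`f(x) = ⊤` iff `x ≥ k` onto the two-element sublattice `{0, 2k-1}` (realized
as `Prop`) preserves arbitrary bounds, but there is an mv-CGS `M`, a state `q`
and an implication formula `p2 → p1` whose value in `M` is `⊥ = 0` while its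
value in `f(M)` is `⊤ = 2k-1`; in particular the translation condition fails. -/
theorem stmt_15 (k : ℕ) (hk : 3 ≤ k) :
    PreservesBounds (fun x : Fin (2 * k - 1 + 1) => ((k ≤ (x : ℕ)) : Prop)) ∧
    ∃ (Agt St Act : Type) (_ : Fintype Agt) (_ : Fintype St) (_ : Fintype Act)
      (_ : Nonempty Agt) (_ : Nonempty St) (_ : Nonempty Act)
      (G : CGS Agt St Act) (σ : Unit → Fin (2 * k - 1 + 1))
      (V : Fin 2 → St → Fin (2 * k - 1 + 1)) (q : St),
      svalI G σ V (.imp (.atom 1) (.atom 0)) q = (⊥ : Fin (2 * k - 1 + 1)) ∧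
      svalI G (fun c => ((k ≤ (σ c : ℕ)) : Prop)) (fun p q' => ((k ≤ (V p q' : ℕ)) : Prop))
          (.imp (.atom 1) (.atom 0)) q = (⊤ : Prop) ∧
      ((k ≤ (svalI G σ V (.imp (.atom 1) (.atom 0)) q).val : Prop) ≠
        svalI G (fun c => ((k ≤ (σ c : ℕ)) : Prop)) (fun p q' => ((k ≤ (V p q' : ℕ)) : Prop))
          (.imp (.atom 1) (.atom 0)) q) := by
  have hbounds : PreservesBounds (fun x : Fin (2 * k - 1 + 1) => k ≤ (x : ℕ)) :=
    preservesBounds_le_of_finite (a := (⟨k, by omega⟩ : Fin _))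
      (by simp [bot_eq_zero, Fin.ext_iff]; omega)
  -- `V p₁ = 1 < V p₂ = 2 < k`: the implication fails in `M`, while both atoms collapse to `⊥`
  -- in `f(M)`.
  let G : CGS Unit Unit Unit := ⟨fun _ _ => Set.univ, fun _ _ => Set.univ_nonempty, fun _ _ => ()⟩
  let σ : Unit → Fin (2 * k - 1 + 1) := fun _ => 0
  let V : Fin 2 → Unit → Fin (2 * k - 1 + 1) := fun p _ => ⟨p + 1, by omega⟩
  have hM : svalI G σ V (.imp (.atom 1) (.atom 0)) () = ⊥ :=
    svalI_imp_of_not_le (by simp [svalI, V, Fin.le_def])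
  have hfM : svalI G (fun c => k ≤ (σ c : ℕ)) (fun p q' => k ≤ (V p q' : ℕ))
      (.imp (.atom 1) (.atom 0)) () = ⊤ :=
    svalI_imp_of_le fun h => by simp only [svalI, V, Fin.val_one, Fin.val_zero] at h ⊢; omega
  refine ⟨hbounds, Unit, Unit, Unit, inferInstance, inferInstance, inferInstance,
    inferInstance, inferInstance, inferInstance, G, σ, V, (), hM, hfM, ?_⟩
  rw [hM, hfM]
  simp only [bot_eq_zero, Fin.val_zero, ne_eq, eq_iff_iff, Prop.top_eq_true, iff_true]
  omega
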